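/- (Deterministic form of Lemma 3.8.) Let N ∈ ℕ, M = 2^{N+1}, and let Λ_N = {(−1,0)} ∪ {(n,k) : 0 ≤ n ≤ N, 0 ≤ k < 2^n}. Define the linear map w : ℝ^{Λ_N} → ℝ^M by w_ℓ(z) = Σ_{(n,k)∈Λ_N} z_{n,k} · Δ^N_ℓ Ψ_{n,k} for ℓ = 0, …, M−1, where Ψ_{−1,0} := Ψ_{−1}. Let p ≥ 1, let F : ℝ^M → ℝ be p-times differentiable, and set G = F ∘ w. Fix indices λ_1 = (n_1,k_1), …, λ_p = (n_p,k_p) in Λ_N, with the convention that the level of the index (−1,0) is counted as 0. If z ∈ ℝ^{Λ_N} and c ≥ 0 are such that every p-th order partial derivative of F at w(z) is bounded in absolute value by c, then |∂^p G / ∂z_{λ_1} ⋯ ∂z_{λ_p} (z)| ≤ c · 2^p · 2^{−(n_1 + ⋯ + n_p)/2}. -/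
import Mathlib


open MeasureTheory

/-- The Haar mother wavelet. -/
noncomputable def haarMother (t : ℝ) : ℝ :=
  if 0 ≤ t ∧ t < 1/2 then 1 else if 1/2 ≤ t ∧ t < 1 then -1 else 0

/-- The Haar function ψ_{n,k}. -/
noncomputable def haarFn (n k : ℕ) (t : ℝ) : ℝ :=
  (2:ℝ) ^ ((n : ℝ)/2) * haarMother ((2:ℝ)^n * t - k)

/-- The antiderivative Ψ_{n,k}(t) = ∫_0^t ψ_{n,k}(s) ds. -/
noncomputable def haarAnti (n k : ℕ) (t : ℝ) : ℝ := ∫ s in (0:ℝ)..t, haarFn n k s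

/-- The function ψ_{-1} = 1_{[0,1]}. -/
noncomputable def haarNeg (t : ℝ) : ℝ := Set.indicator (Set.Icc (0:ℝ) 1) (fun _ => 1) t

/-- The antiderivative Ψ_{-1}(t) = ∫_0^t ψ_{-1}(s) ds. -/
noncomputable def haarNegAnti (t : ℝ) : ℝ := ∫ s in (0:ℝ)..t, haarNeg s

/-- The dyadic grid point t^N_ℓ = ℓ / 2^{N+1}. -/
noncomputable def gridPt (N ℓ : ℕ) : ℝ := (ℓ : ℝ) / 2 ^ (N+1)

/-- The index set Λ_N = {(-1,0)} ∪ {(n,k) : 0 ≤ n ≤ N, 0 ≤ k < 2^n}; `none` encodes the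
index (-1,0). -/
abbrev HaarIdx (N : ℕ) := Option ((n : Fin (N+1)) × Fin (2^(n:ℕ)))

/-- The increment Δ^N_ℓ Ψ_i over the grid cell `[t^N_ℓ, t^N_{ℓ+1}]` for an index `i ∈ Λ_N`. -/
noncomputable def deltaPsi (N : ℕ) (i : HaarIdx N) (ℓ : Fin (2^(N+1))) : ℝ :=
  match i with
  | none => haarNegAnti (gridPt N ((ℓ : ℕ)+1)) - haarNegAnti (gridPt N (ℓ : ℕ))
  | some ⟨n, k⟩ => haarAnti n k (gridPt N ((ℓ : ℕ)+1)) - haarAnti n k (gridPt N (ℓ : ℕ))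

/-- The linear map sending Haar coefficients to the vector of Brownian-path increments:
`w_ℓ(z) = Σ_{(n,k) ∈ Λ_N} z_{n,k} Δ^N_ℓ Ψ_{n,k}`. -/
noncomputable def wMap (N : ℕ) (z : HaarIdx N → ℝ) : Fin (2^(N+1)) → ℝ :=
  fun ℓ => ∑ i : HaarIdx N, z i * deltaPsi N i ℓ


/-- The level of an index in Λ_N, with the level of (-1,0) counted as 0. -/
def haarLevel (N : ℕ) : HaarIdx N → ℕ
  | none => 0
  | some ⟨n, _⟩ => n

lemma measurable_haarMother : Measurable haarMother := by
  unfold haarMother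
  apply Measurable.ite
  · exact measurableSet_Ico (a := (0:ℝ)) (b := 1/2)
  · exact measurable_const
  apply Measurable.ite
  · exact measurableSet_Ico (a := (1/2:ℝ)) (b := 1)
  · exact measurable_const
  · exact measurable_const

lemma abs_haarMother_le (t : ℝ) : |haarMother t| ≤ 1 := by
  unfold haarMother; split_ifs <;> norm_num

lemma haarMother_eq_zero {t : ℝ} (h : t ∉ Set.Ico (0:ℝ) 1) : haarMother t = 0 := by
  simp only [Set.mem_Ico, not_and_or, not_lt, not_le] at h
  unfold haarMother
  split_ifs with h1 h2 <;> [skip; skip; rfl]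
  · rcases h with h | h
    · linarith [h1.1]
    · linarith [h1.2]
  · rcases h with h | h
    · linarith [h2.1]
    · linarith [h2.2]


lemma intervalIntegrable_of_bdd {f : ℝ → ℝ} (hm : Measurable f) {C : ℝ}
    (h : ∀ t, |f t| ≤ C) (a b : ℝ) : IntervalIntegrable f volume a b := by
  apply IntervalIntegrable.mono_fun' (g := fun _ => C) intervalIntegrable_const
    hm.aestronglyMeasurable
  filter_upwards with t
  simpa using h t

lemma sum_abs_increments_le {f : ℝ → ℝ} (hm : Measurable f) {C a b : ℝ} (hC : 0 ≤ C)
    (hf : ∀ t, |f t| ≤ C) (hsupp : ∀ t, t ∉ Set.Icc a b → f t = 0)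
    (ha : 0 ≤ a) (hab : a ≤ b) (hb : b ≤ 1) (N : ℕ) :
    ∑ ℓ : Fin (2^(N+1)),
      |(∫ s in (0:ℝ)..(gridPt N ((ℓ:ℕ)+1)), f s) - ∫ s in (0:ℝ)..(gridPt N (ℓ:ℕ)), f s|
      ≤ C * (b - a) := by
  have hmono : ∀ u v : ℕ, u ≤ v → gridPt N u ≤ gridPt N v := by
    intro u v huv
    unfold gridPt
    have : (u:ℝ) ≤ v := by exact_mod_cast huv
    gcongr
  have hint : ∀ u v : ℝ, IntervalIntegrable f volume u v := intervalIntegrable_of_bdd hm hf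
  have hmabs : Measurable fun t => |f t| := hm.abs
  have habs : ∀ t, |(fun t => |f t|) t| ≤ C := by intro t; simpa [abs_abs] using hf t
  have hintabs : ∀ u v : ℝ, IntervalIntegrable (fun t => |f t|) volume u v :=
    intervalIntegrable_of_bdd hmabs habs
  have step1 : ∀ ℓ : Fin (2^(N+1)),
      |(∫ s in (0:ℝ)..(gridPt N ((ℓ:ℕ)+1)), f s) - ∫ s in (0:ℝ)..(gridPt N (ℓ:ℕ)), f s|
      ≤ ∫ s in (gridPt N (ℓ:ℕ))..(gridPt N ((ℓ:ℕ)+1)), |f s| := by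
    intro ℓ
    rw [intervalIntegral.integral_interval_sub_left (hint 0 _) (hint 0 _)]
    exact intervalIntegral.abs_integral_le_integral_abs (hmono _ _ (Nat.le_succ _))
  calc ∑ ℓ : Fin (2^(N+1)),
      |(∫ s in (0:ℝ)..(gridPt N ((ℓ:ℕ)+1)), f s) - ∫ s in (0:ℝ)..(gridPt N (ℓ:ℕ)), f s|
      ≤ ∑ ℓ : Fin (2^(N+1)), ∫ s in (gridPt N (ℓ:ℕ))..(gridPt N ((ℓ:ℕ)+1)), |f s| :=
        Finset.sum_le_sum fun ℓ _ => step1 ℓ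
    _ = ∫ s in (0:ℝ)..1, |f s| := by
        rw [Fin.sum_univ_eq_sum_range (fun ℓ => ∫ s in (gridPt N ℓ)..(gridPt N (ℓ+1)), |f s|)]
        rw [intervalIntegral.sum_integral_adjacent_intervals (fun k _ => hintabs _ _)]
        norm_num [gridPt]
    _ ≤ C * (b - a) := by
        rw [intervalIntegral.integral_of_le (by norm_num : (0:ℝ) ≤ 1)]
        haveI : IsFiniteMeasure (volume.restrict (Set.Ioc (0:ℝ) 1)) :=
          ⟨by simp [Measure.restrict_apply_univ]⟩
        have hle : ∀ s ∈ Set.Ioc (0:ℝ) 1, |f s| ≤ Set.indicator (Set.Icc a b) (fun _ => C) s := by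
          intro s _
          by_cases hs : s ∈ Set.Icc a b
          · rw [Set.indicator_of_mem hs]; exact hf s
          · rw [Set.indicator_of_notMem hs, hsupp s hs]; simp
        have h1 : ∫ s in Set.Ioc (0:ℝ) 1, |f s| ≤
            ∫ s in Set.Ioc (0:ℝ) 1, Set.indicator (Set.Icc a b) (fun _ => C) s := by
          apply setIntegral_mono_on
          · exact (hintabs 0 1).1
          · exact (integrable_const C).indicator measurableSet_Icc
          · exact measurableSet_Ioc
          · exact hle
        refine h1.trans ?_
        rw [setIntegral_indicator measurableSet_Icc, setIntegral_const]
        have hvol : (volume (Set.Ioc (0:ℝ) 1 ∩ Set.Icc a b)).toReal ≤ b - a := by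
          have h2 : volume (Set.Ioc (0:ℝ) 1 ∩ Set.Icc a b) ≤ ENNReal.ofReal (b - a) := by
            calc volume (Set.Ioc (0:ℝ) 1 ∩ Set.Icc a b) ≤ volume (Set.Icc a b) :=
              measure_mono Set.inter_subset_right
            _ = ENNReal.ofReal (b - a) := Real.volume_Icc
          calc (volume (Set.Ioc (0:ℝ) 1 ∩ Set.Icc a b)).toReal
              ≤ (ENNReal.ofReal (b - a)).toReal := ENNReal.toReal_mono (by simp) h2
            _ = b - a := ENNReal.toReal_ofReal (by linarith)
        calc (volume (Set.Ioc (0:ℝ) 1 ∩ Set.Icc a b)).toReal • C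
            = (volume (Set.Ioc (0:ℝ) 1 ∩ Set.Icc a b)).toReal * C := by rw [smul_eq_mul]
          _ ≤ (b - a) * C := by apply mul_le_mul_of_nonneg_right hvol hC
          _ = C * (b - a) := mul_comm _ _


lemma measurable_haarFn (n k : ℕ) : Measurable (haarFn n k) := by
  unfold haarFn
  exact measurable_const.mul
    (measurable_haarMother.comp ((measurable_id.const_mul _).sub measurable_const))

lemma abs_haarFn_le (n k : ℕ) (t : ℝ) : |haarFn n k t| ≤ (2:ℝ) ^ ((n:ℝ)/2) := by
  unfold haarFn
  rw [abs_mul, abs_of_nonneg (Real.rpow_nonneg (by norm_num) _)]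
  calc (2:ℝ)^((n:ℝ)/2) * |haarMother ((2:ℝ)^n * t - k)| ≤ (2:ℝ)^((n:ℝ)/2) * 1 := by
        apply mul_le_mul_of_nonneg_left (abs_haarMother_le _)
          (Real.rpow_nonneg (by norm_num) _)
    _ = (2:ℝ)^((n:ℝ)/2) := mul_one _

lemma haarFn_eq_zero (n k : ℕ) {t : ℝ}
    (h : t ∉ Set.Icc ((k:ℝ)/2^n) (((k:ℝ)+1)/2^n)) : haarFn n k t = 0 := by
  have h2 : (0:ℝ) < 2^n := by positivity
  simp only [Set.mem_Icc, not_and_or, not_le] at h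
  unfold haarFn
  rw [haarMother_eq_zero, mul_zero]
  simp only [Set.mem_Ico, not_and_or, not_le, not_lt]
  rcases h with h | h
  · left
    have h' := (lt_div_iff₀ h2).mp h
    nlinarith
  · right
    have h' := (div_lt_iff₀ h2).mp h
    nlinarith

lemma sum_abs_deltaPsi_le (N : ℕ) (i : HaarIdx N) :
    ∑ ℓ : Fin (2^(N+1)), |deltaPsi N i ℓ| ≤ 2 * (2:ℝ) ^ (-((haarLevel N i : ℝ))/2) := by
  match i with
  | none =>
    have hm : Measurable haarNeg := measurable_const.indicator measurableSet_Icc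
    have hb : ∀ t, |haarNeg t| ≤ 1 := by
      intro t
      unfold haarNeg
      by_cases ht : t ∈ Set.Icc (0:ℝ) 1 <;>
        simp [Set.indicator_of_mem, Set.indicator_of_notMem, ht]
    have hs : ∀ t, t ∉ Set.Icc (0:ℝ) 1 → haarNeg t = 0 := fun t ht =>
      Set.indicator_of_notMem ht _
    have := sum_abs_increments_le hm (by norm_num) hb hs le_rfl (by norm_num) le_rfl N
    simp only [deltaPsi, haarNegAnti, haarLevel]
    calc ∑ ℓ : Fin (2^(N+1)),
        |(∫ s in (0:ℝ)..(gridPt N ((ℓ:ℕ)+1)), haarNeg s) - ∫ s in (0:ℝ)..(gridPt N (ℓ:ℕ)), haarNeg s|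
        ≤ 1 * (1 - 0) := this
      _ ≤ 2 * (2:ℝ) ^ (-((0:ℕ):ℝ)/2) := by norm_num
  | some ⟨n, k⟩ =>
    have hk : (k:ℕ) < 2^(n:ℕ) := k.isLt
    have h2 : (0:ℝ) < 2^(n:ℕ) := by positivity
    have hb1 : ((k:ℝ)+1)/2^(n:ℕ) ≤ 1 := by
      rw [div_le_one h2]
      have : ((k:ℕ):ℝ) + 1 ≤ ((2^(n:ℕ) : ℕ) : ℝ) := by exact_mod_cast hk
      simpa using this
    have ha : (0:ℝ) ≤ (k:ℝ)/2^(n:ℕ) := by positivity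
    have hab : (k:ℝ)/2^(n:ℕ) ≤ ((k:ℝ)+1)/2^(n:ℕ) := by
      apply div_le_div_of_nonneg_right <;> linarith
    have key := sum_abs_increments_le (measurable_haarFn n k)
      (Real.rpow_nonneg (by norm_num) _) (abs_haarFn_le n k)
      (fun t ht => haarFn_eq_zero n k ht) ha hab hb1 N
    simp only [deltaPsi, haarAnti, haarLevel]
    refine le_trans key ?_
    have hba : ((k:ℝ)+1)/2^(n:ℕ) - (k:ℝ)/2^(n:ℕ) = (2:ℝ) ^ (-((n:ℕ):ℝ)) := by
      rw [div_sub_div_same]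
      have hrw : (2:ℝ)^(-((n:ℕ):ℝ)) = ((2:ℝ)^(n:ℕ))⁻¹ := by
        rw [Real.rpow_neg (by norm_num), Real.rpow_natCast]
      rw [hrw]
      ring
    rw [hba, ← Real.rpow_add (by norm_num)]
    have : ((n:ℕ):ℝ)/2 + -((n:ℕ):ℝ) = -((n:ℕ):ℝ)/2 := by ring
    rw [this]
    nlinarith [Real.rpow_nonneg (by norm_num : (0:ℝ) ≤ 2) (-((n:ℕ):ℝ)/2)]


noncomputable def wCLM (N : ℕ) : (HaarIdx N → ℝ) →L[ℝ] (Fin (2^(N+1)) → ℝ) :=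
  LinearMap.toContinuousLinearMap
  { toFun := wMap N
    map_add' := by
      intro x y; funext ℓ
      simp [wMap, add_mul, Finset.sum_add_distrib]
    map_smul' := by
      intro r x; funext ℓ
      simp [wMap, Finset.mul_sum, mul_add, mul_assoc, mul_left_comm] }

lemma wCLM_apply (N : ℕ) (z : HaarIdx N → ℝ) : wCLM N z = wMap N z := rfl

lemma wCLM_single (N : ℕ) (i0 : HaarIdx N) : (wCLM N) (Pi.single i0 (1:ℝ)) =
    ∑ ℓ : Fin (2^(N+1)), deltaPsi N i0 ℓ • (Pi.single ℓ 1 : Fin (2^(N+1)) → ℝ) := by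
  funext ℓ'
  rw [wCLM_apply]
  simp [wMap, Finset.sum_apply, Pi.single_apply, mul_ite, ite_mul,
    Finset.sum_ite_eq, Finset.sum_ite_eq']


/-- deterministic form of Lemma 3.8: if every `p`-th order partial derivative
of `F` at `w(z)` is bounded by `c`, then for indices `λ_1, …, λ_p ∈ Λ_N` of levels
`n_1, …, n_p` the `p`-th order partial derivative of `G = F ∘ w` is bounded by
`c · 2^p · 2^{-(n_1+⋯+n_p)/2}`. -/
theorem abs_iteratedFDeriv_comp_wMap_le (N : ℕ) (p : ℕ) (hp : 1 ≤ p)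
    (F : (Fin (2^(N+1)) → ℝ) → ℝ) (hF : ContDiff ℝ p F)
    (z : HaarIdx N → ℝ) (c : ℝ) (hc : 0 ≤ c)
    (hbound : ∀ v : Fin p → Fin (2^(N+1)),
      |iteratedFDeriv ℝ p F (wMap N z) (fun i => Pi.single (v i) 1)| ≤ c)
    (lam : Fin p → HaarIdx N) :
    |iteratedFDeriv ℝ p (fun z' => F (wMap N z')) z (fun i => Pi.single (lam i) 1)| ≤
      c * 2 ^ p * (2:ℝ) ^ (-(∑ j, ((haarLevel N (lam j) : ℝ))) / 2) := by
  have hcomp : (fun z' => F (wMap N z')) = F ∘ (wCLM N) := rfl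
  rw [hcomp, ContinuousLinearMap.iteratedFDeriv_comp_right (wCLM N) hF z le_rfl]
  rw [ContinuousMultilinearMap.compContinuousLinearMap_apply]
  set f := iteratedFDeriv ℝ p F ((wCLM N) z) with hfdef
  have hwz : (wCLM N) z = wMap N z := rfl
  have hexp : (f fun i => (wCLM N) (Pi.single (lam i) 1)) =
      ∑ r : Fin p → Fin (2^(N+1)),
        (∏ i, deltaPsi N (lam i) (r i)) • f (fun i => Pi.single (r i) (1:ℝ)) := by
    have h1 : (f fun i => (wCLM N) (Pi.single (lam i) 1)) =
        f fun i => ∑ ℓ : Fin (2^(N+1)), deltaPsi N (lam i) ℓ • (Pi.single ℓ 1 : Fin (2^(N+1)) → ℝ) := by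
      congr 1
      funext i
      exact wCLM_single N (lam i)
    rw [h1, f.map_sum (g := fun i ℓ => deltaPsi N (lam i) ℓ • (Pi.single ℓ 1 : Fin (2^(N+1)) → ℝ))]
    apply Finset.sum_congr rfl
    intro r _
    exact f.map_smul_univ (fun i => deltaPsi N (lam i) (r i))
      (fun i => Pi.single (r i) (1:ℝ))
  rw [hexp]
  have hterm : ∀ r : Fin p → Fin (2^(N+1)),
      |(∏ i, deltaPsi N (lam i) (r i)) • f (fun i => Pi.single (r i) (1:ℝ))| ≤
        (∏ i, |deltaPsi N (lam i) (r i)|) * c := by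
    intro r
    rw [smul_eq_mul, abs_mul, Finset.abs_prod]
    apply mul_le_mul_of_nonneg_left _ (Finset.prod_nonneg fun i _ => abs_nonneg _)
    rw [hfdef, hwz]
    exact hbound r
  calc |∑ r : Fin p → Fin (2^(N+1)),
        (∏ i, deltaPsi N (lam i) (r i)) • f (fun i => Pi.single (r i) (1:ℝ))|
      ≤ ∑ r : Fin p → Fin (2^(N+1)),
        |(∏ i, deltaPsi N (lam i) (r i)) • f (fun i => Pi.single (r i) (1:ℝ))| :=
        Finset.abs_sum_le_sum_abs _ _
    _ ≤ ∑ r : Fin p → Fin (2^(N+1)), (∏ i, |deltaPsi N (lam i) (r i)|) * c :=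
        Finset.sum_le_sum fun r _ => hterm r
    _ = (∏ i, ∑ ℓ : Fin (2^(N+1)), |deltaPsi N (lam i) ℓ|) * c := by
        rw [Finset.prod_univ_sum, Fintype.piFinset_univ, ← Finset.sum_mul]
    _ ≤ (∏ i : Fin p, 2 * (2:ℝ) ^ (-((haarLevel N (lam i) : ℝ))/2)) * c := by
        apply mul_le_mul_of_nonneg_right _ hc
        apply Finset.prod_le_prod
        · intro i _
          exact Finset.sum_nonneg fun ℓ _ => abs_nonneg _
        · intro i _
          exact sum_abs_deltaPsi_le N (lam i)
    _ = c * 2 ^ p * (2:ℝ) ^ (-(∑ j, ((haarLevel N (lam j) : ℝ))) / 2) := by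
        rw [Finset.prod_mul_distrib, Finset.prod_const]
        rw [← Real.rpow_sum_of_pos (by norm_num : (0:ℝ) < 2)
          (fun i => -((haarLevel N (lam i) : ℝ))/2) Finset.univ]
        have : ∑ i : Fin p, -((haarLevel N (lam i) : ℝ))/2 =
            -(∑ j, ((haarLevel N (lam j) : ℝ))) / 2 := by
          rw [neg_div, ← Finset.sum_div, Finset.sum_neg_distrib, neg_div]
        rw [this]
        simp [Finset.card_univ]
        ring
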